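/- arXiv:2503.10292 — 5 statements merged into one kernel-verified Lean document; each statement's English description precedes it below -/
import Mathlib

section
/- In any execution of the AlterBFT protocol in the hybrid synchronous model with n > 2f replicas of which at most f are Byzantine, every block B_k with height k ≠ 0 proposed by an honest replica in an epoch e has as its ancestors only blocks that have been certified in some epoch e' < e. -/
open Finset

/-- An execution of the AlterBFT protocol in the hybrid synchronous system model:
`n` replicas, at most `f` Byzantine (`n > 2f`), small (type S) messages between honest
replicas always delivered within `ΔS`, large (type L) messages sent at time `t`
delivered by `max t GST + ΔL`.  All protocol events are time-stamped predicates. -/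
structure AlterBFTExecution where
  /-- number of replicas -/
  n : ℕ
  /-- fault threshold -/
  f : ℕ
  /-- n > 2f -/
  n_gt : n > 2 * f
  /-- the set of Byzantine (faulty) replicas -/
  Byz : Finset (Fin n)
  /-- at most f replicas are Byzantine -/
  byz_le : Byz.card ≤ f
  /-- synchrony bound for small (type S) messages, holds at all times -/
  ΔS : ℝ
  /-- eventual bound for large (type L) messages -/
  ΔL : ℝ
  /-- global stabilization time -/
  GST : ℝ
  ΔS_pos : 0 < ΔS
  ΔL_pos : 0 < ΔL
  /-- blocks -/
  Block : Type
  /-- the previous block in the hash chain (`none` for the genesis block) -/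
  parent : Block → Option Block
  /-- height of a block in the chain -/
  height : Block → ℕ
  /-- the application-specific external validity predicate `valid()` -/
  validBlock : Block → Prop
  /-- leader of each epoch -/
  leader : ℕ → Fin n
  /-- `startsEpoch r e t`: replica `r` starts (enters) epoch `e` at time `t` -/
  startsEpoch : Fin n → ℕ → ℝ → Prop
  /-- `proposes l e B t`: `l` broadcasts the proposal (type L) carrying block `B` for epoch `e` at time `t` -/
  proposes : Fin n → ℕ → Block → ℝ → Prop
  /-- `recvProposal q e B t`: `q` receives the full proposal carrying `B` for epoch `e` at time `t` -/
  recvProposal : Fin n → ℕ → Block → ℝ → Prop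
  /-- `votesAt r e B t`: `r` signs and broadcasts (type S) a vote for block `B` in epoch `e` at time `t` -/
  votesAt : Fin n → ℕ → Block → ℝ → Prop
  /-- `sendsSilence r e t`: `r` signs and broadcasts (type S) a SILENCE message for epoch `e` at time `t` -/
  sendsSilence : Fin n → ℕ → ℝ → Prop
  /-- `hasBlockCert r e B t`: `r` holds the block certificate `C_e(B)` at time `t` -/
  hasBlockCert : Fin n → ℕ → Block → ℝ → Prop
  /-- `hasSilenceCert r e t`: `r` holds a silence certificate `C_e(SILENCE)` at time `t` -/
  hasSilenceCert : Fin n → ℕ → ℝ → Prop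
  /-- `hasEquivCert r e t`: `r` holds an equivocation certificate `C_e(EQUIV)` at time `t` -/
  hasEquivCert : Fin n → ℕ → ℝ → Prop
  /-- `locksAt r e B t`: `r` locks on `B` in epoch `e` at time `t`, setting `lockedBC := C_e(B)` -/
  locksAt : Fin n → ℕ → Block → ℝ → Prop
  /-- `lockedBCAt r t e B`: at time `t`, `r`'s variable `lockedBC` equals `C_e(B)` -/
  lockedBCAt : Fin n → ℝ → ℕ → Block → Prop
  /-- `commitsRegular r e B t`: `r` directly commits `B` in epoch `e` at time `t` by the regular commit rule -/
  commitsRegular : Fin n → ℕ → Block → ℝ → Prop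
  /-- `commitsFast r e B t`: `r` directly commits `B` in epoch `e` at time `t` by the fast commit rule -/
  commitsFast : Fin n → ℕ → Block → ℝ → Prop
  /-- `commits r B t`: `r` commits (directly or indirectly) block `B` at time `t` -/
  commits : Fin n → Block → ℝ → Prop

namespace AlterBFTExecution

variable (P : AlterBFTExecution)

/-- A replica is honest iff it is not Byzantine. -/
def Honest (r : Fin P.n) : Prop := r ∉ P.Byz

/-- `r` votes for `B` in epoch `e` (at some time). -/
def votes (r : Fin P.n) (e : ℕ) (B : P.Block) : Prop := ∃ t, P.votesAt r e B t

/-- `B` is certified in epoch `e`: `f+1` distinct replicas sign votes for `B` in `e`. -/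
def Certified (e : ℕ) (B : P.Block) : Prop :=
  ∃ S : Finset (Fin P.n), P.f + 1 ≤ S.card ∧ ∀ r ∈ S, P.votes r e B

/-- `B` is certified in epoch `e` by time `t`. -/
def CertifiedBy (e : ℕ) (B : P.Block) (t : ℝ) : Prop :=
  ∃ S : Finset (Fin P.n), P.f + 1 ≤ S.card ∧ ∀ r ∈ S, ∃ t' ≤ t, P.votesAt r e B t'

/-- `B'` extends `B`: `B` is an ancestor of `B'` along the hash chain (including `B' = B`). -/
def Extends (B' B : P.Block) : Prop :=
  Relation.ReflTransGen (fun x y => P.parent x = some y) B' B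

/-- `r` holds some certificate (block, silence or equivocation) for epoch `e` at time `t`. -/
def AnyCert (r : Fin P.n) (e : ℕ) (t : ℝ) : Prop :=
  (∃ B, P.hasBlockCert r e B t) ∨ P.hasSilenceCert r e t ∨ P.hasEquivCert r e t

/-- `r` directly commits `B` in epoch `e` at time `t` (regular or fast commit rule). -/
def commitsDirectly (r : Fin P.n) (e : ℕ) (B : P.Block) (t : ℝ) : Prop :=
  P.commitsRegular r e B t ∨ P.commitsFast r e B t

/-- `r` is in epoch `e` at time `t`: it has started `e` and not yet started `e+1`. -/
def inEpoch (r : Fin P.n) (e : ℕ) (t : ℝ) : Prop :=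
  (∃ t0 ≤ t, P.startsEpoch r e t0) ∧ ¬ ∃ t1 ≤ t, P.startsEpoch r (e + 1) t1

/-- The rules of the AlterBFT protocol together with the hybrid synchrony
assumptions, constraining an execution. -/
structure Valid (P : AlterBFTExecution) : Prop where
  /-- blocks form a hash chain: the parent has one smaller height -/
  parent_height : ∀ B B' : P.Block, P.parent B = some B' → P.height B = P.height B' + 1
  /-- only the genesis block (height 0) has no predecessor -/
  parent_none : ∀ B : P.Block, P.parent B = none ↔ P.height B = 0
  /-- every honest replica starts epoch 0 -/
  starts_zero : ∀ r : Fin P.n, P.Honest r → ∃ t, P.startsEpoch r 0 t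
  /-- all honest replicas start epoch 0 within `ΔS` of each other -/
  start_zero_sync : ∀ r q : Fin P.n, ∀ t t' : ℝ, P.Honest r → P.Honest q →
    P.startsEpoch r 0 t → P.startsEpoch q 0 t' → |t - t'| ≤ P.ΔS
  /-- an honest replica starts an epoch at most once -/
  start_unique : ∀ r : Fin P.n, ∀ e : ℕ, ∀ t t' : ℝ, P.Honest r →
    P.startsEpoch r e t → P.startsEpoch r e t' → t = t'
  /-- an honest replica enters epoch `e+1` only after having entered epoch `e` -/
  start_succ : ∀ r : Fin P.n, ∀ e : ℕ, ∀ t : ℝ, P.Honest r →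
    P.startsEpoch r (e + 1) t → ∃ t' < t, P.startsEpoch r e t'
  /-- epoch start times strictly increase -/
  start_increasing : ∀ r : Fin P.n, ∀ e : ℕ, ∀ t t' : ℝ, P.Honest r →
    P.startsEpoch r e t → P.startsEpoch r (e + 1) t' → t < t'
  /-- an honest replica moves to epoch `e+1` either immediately upon receiving a block
  certificate for `e`, or `2ΔS` after receiving a silence or equivocation certificate for `e` -/
  advance_needs_cert : ∀ r : Fin P.n, ∀ e : ℕ, ∀ t : ℝ, P.Honest r →
    P.startsEpoch r (e + 1) t →
    (∃ t' ≤ t, ∃ B, P.hasBlockCert r e B t') ∨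
      (∃ t', t' + 2 * P.ΔS ≤ t ∧ (P.hasSilenceCert r e t' ∨ P.hasEquivCert r e t'))
  /-- once an honest replica in epoch `e` holds any certificate for `e`, it starts
  epoch `e+1` within `2ΔS` -/
  advance_from_cert : ∀ r : Fin P.n, ∀ e : ℕ, ∀ t t' : ℝ, P.Honest r →
    P.startsEpoch r e t → P.AnyCert r e t' → t ≤ t' →
    ∃ t'', P.startsEpoch r (e + 1) t'' ∧ t'' ≤ t' + 2 * P.ΔS
  /-- an honest replica still in epoch `e` that receives a block certificate for `e`
  starts epoch `e+1` immediately -/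
  advance_block_immediate : ∀ r : Fin P.n, ∀ e : ℕ, ∀ B : P.Block, ∀ t t' : ℝ,
    P.Honest r → P.startsEpoch r e t → P.hasBlockCert r e B t' → t ≤ t' →
    (¬ ∃ t'' < t', P.startsEpoch r (e + 1) t'') → P.startsEpoch r (e + 1) t'
  /-- block certificates are unforgeable: they contain `f+1` signed votes -/
  blockcert_sound : ∀ r : Fin P.n, ∀ e : ℕ, ∀ B : P.Block, ∀ t : ℝ,
    P.hasBlockCert r e B t → P.CertifiedBy e B t
  /-- silence certificates contain `f+1` signed SILENCE messages from distinct replicas -/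
  silencecert_sound : ∀ r : Fin P.n, ∀ e : ℕ, ∀ t : ℝ, P.hasSilenceCert r e t →
    ∃ S : Finset (Fin P.n), P.f + 1 ≤ S.card ∧ ∀ p ∈ S, ∃ t' ≤ t, P.sendsSilence p e t'
  /-- equivocation certificates contain two votes signed by the epoch leader
  for two different blocks -/
  equivcert_sound : ∀ r : Fin P.n, ∀ e : ℕ, ∀ t : ℝ, P.hasEquivCert r e t →
    ∃ B B' : P.Block, B ≠ B' ∧ (∃ t1 ≤ t, P.votesAt (P.leader e) e B t1) ∧
      (∃ t2 ≤ t, P.votesAt (P.leader e) e B' t2)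
  /-- votes are type S: `f+1` honest votes cast by time `t` yield a block certificate
  at every honest replica by `t + ΔS` -/
  blockcert_formation : ∀ q : Fin P.n, ∀ e : ℕ, ∀ B : P.Block, ∀ t : ℝ,
    ∀ S : Finset (Fin P.n), P.Honest q → P.f + 1 ≤ S.card →
    (∀ r ∈ S, P.Honest r ∧ ∃ t' ≤ t, P.votesAt r e B t') →
    ∃ t' ≤ t + P.ΔS, P.hasBlockCert q e B t'
  /-- SILENCE messages are type S: `f+1` honest SILENCE messages sent by time `t`
  yield a silence certificate at every honest replica by `t + ΔS` -/
  silencecert_formation : ∀ q : Fin P.n, ∀ e : ℕ, ∀ t : ℝ,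
    ∀ S : Finset (Fin P.n), P.Honest q → P.f + 1 ≤ S.card →
    (∀ r ∈ S, P.Honest r ∧ ∃ t' ≤ t, P.sendsSilence r e t') →
    ∃ t' ≤ t + P.ΔS, P.hasSilenceCert q e t'
  /-- honest voters forward the leader's signed vote (type S), so votes by two honest
  replicas for different blocks in the same epoch give every honest replica an
  equivocation certificate within `ΔS` -/
  equivcert_formation : ∀ q1 q2 r : Fin P.n, ∀ e : ℕ, ∀ B B' : P.Block, ∀ t1 t2 : ℝ,
    P.Honest q1 → P.Honest q2 → P.Honest r → B ≠ B' →
    P.votesAt q1 e B t1 → P.votesAt q2 e B' t2 →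
    ∃ t ≤ max t1 t2 + P.ΔS, P.hasEquivCert r e t
  /-- an honest replica broadcasts a block certificate it holds (QUIT-EPOCH, type S) -/
  blockcert_forward : ∀ r q : Fin P.n, ∀ e : ℕ, ∀ B : P.Block, ∀ t : ℝ,
    P.Honest r → P.Honest q → P.hasBlockCert r e B t →
    ∃ t' ≤ t + P.ΔS, P.hasBlockCert q e B t'
  /-- an honest replica broadcasts a silence or equivocation certificate it holds
  (QUIT-EPOCH, type S), so every honest replica holds some certificate within `ΔS` -/
  misbehavior_forward : ∀ r q : Fin P.n, ∀ e : ℕ, ∀ t : ℝ,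
    P.Honest r → P.Honest q → (P.hasSilenceCert r e t ∨ P.hasEquivCert r e t) →
    ∃ t' ≤ t + P.ΔS, P.AnyCert q e t'
  /-- if the `timeoutCertificate` of duration `ΔL + 4ΔS` expires without any
  certificate received, an honest replica broadcasts a SILENCE message -/
  silence_send : ∀ r : Fin P.n, ∀ e : ℕ, ∀ t : ℝ, P.Honest r → P.startsEpoch r e t →
    (¬ ∃ t' ≤ t + P.ΔL + 4 * P.ΔS, P.AnyCert r e t') →
    P.sendsSilence r e (t + P.ΔL + 4 * P.ΔS)
  /-- an honest replica sends a SILENCE message only when its `timeoutCertificate`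
  of duration `ΔL + 4ΔS` expires with no certificate received -/
  silence_only_on_timeout : ∀ r : Fin P.n, ∀ e : ℕ, ∀ ts : ℝ, P.Honest r →
    P.sendsSilence r e ts →
    ∃ t, P.startsEpoch r e t ∧ ts = t + P.ΔL + 4 * P.ΔS ∧ ¬ ∃ t' ≤ ts, P.AnyCert r e t'
  /-- an honest leader proposes a block immediately, or after its
  `timeoutEpochChange` of `2ΔS` expires -/
  leader_propose : ∀ e : ℕ, ∀ t : ℝ, P.Honest (P.leader e) →
    P.startsEpoch (P.leader e) e t →
    ∃ B tp, P.proposes (P.leader e) e B tp ∧ tp ≤ t + 2 * P.ΔS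
  /-- proposals are type L messages: delivered to honest replicas by `max t GST + ΔL` -/
  propose_delivery : ∀ p q : Fin P.n, ∀ e : ℕ, ∀ B : P.Block, ∀ t : ℝ,
    P.Honest p → P.Honest q → P.proposes p e B t →
    ∃ t' ≤ max t P.GST + P.ΔL, P.recvProposal q e B t'
  /-- an honest proposer of a non-genesis block includes a valid block certificate,
  from an earlier epoch, for the proposed block's predecessor -/
  propose_chain : ∀ r : Fin P.n, ∀ e : ℕ, ∀ B : P.Block, ∀ t : ℝ,
    P.Honest r → P.proposes r e B t → P.height B ≠ 0 →
    ∃ B', P.parent B = some B' ∧ ∃ e' < e, P.Certified e' B'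
  /-- an honest replica still in epoch `e` that receives the proposal of an honest
  leader of `e` votes for it -/
  honest_vote_on_proposal : ∀ e : ℕ, ∀ B : P.Block, ∀ tp : ℝ, ∀ q : Fin P.n, ∀ t : ℝ,
    P.Honest (P.leader e) → P.proposes (P.leader e) e B tp →
    P.Honest q → P.recvProposal q e B t → P.inEpoch q e t → P.votesAt q e B t
  /-- honest replicas vote at most once per epoch -/
  vote_once : ∀ r : Fin P.n, ∀ e : ℕ, ∀ B B' : P.Block, ∀ t t' : ℝ, P.Honest r →
    P.votesAt r e B t → P.votesAt r e B' t' → B = B'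
  /-- honest replicas vote only for blocks satisfying the validity predicate -/
  vote_valid : ∀ r : Fin P.n, ∀ e : ℕ, ∀ B : P.Block, ∀ t : ℝ, P.Honest r →
    P.votesAt r e B t → P.validBlock B
  /-- an honest replica votes only after receiving the full proposal -/
  vote_after_proposal : ∀ r : Fin P.n, ∀ e : ℕ, ∀ B : P.Block, ∀ t : ℝ, P.Honest r →
    P.votesAt r e B t → ∃ t' ≤ t, P.recvProposal r e B t'
  /-- upon voting, an honest replica forwards the full proposal (type L) to all replicas -/
  vote_forwards_proposal : ∀ r q : Fin P.n, ∀ e : ℕ, ∀ B : P.Block, ∀ t : ℝ,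
    P.Honest r → P.Honest q → P.votesAt r e B t →
    ∃ t' ≤ max t P.GST + P.ΔL, P.recvProposal q e B t'
  /-- an honest replica votes for a non-genesis block only if its predecessor is
  certified in an earlier epoch -/
  vote_parent_cert : ∀ r : Fin P.n, ∀ e : ℕ, ∀ B : P.Block, ∀ t : ℝ, P.Honest r →
    P.votesAt r e B t → P.height B ≠ 0 →
    ∃ B', P.parent B = some B' ∧ ∃ e' < e, P.Certified e' B'
  /-- voting rule: an honest replica whose `lockedBC` is `C_e(B)` votes in epoch `e'`
  only for a block whose proposal carries a block certificate at least as recent as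
  `C_e(B)`, from an epoch before `e'`, certifying a block the proposed block extends -/
  vote_rule : ∀ r : Fin P.n, ∀ e' : ℕ, ∀ B' : P.Block, ∀ t : ℝ, ∀ e : ℕ, ∀ B : P.Block,
    P.Honest r → P.votesAt r e' B' t → P.lockedBCAt r t e B →
    ∃ e'' B'', e ≤ e'' ∧ e'' < e' ∧ P.Certified e'' B'' ∧ P.Extends B' B''
  /-- an honest replica that receives a block certificate for its current epoch locks on it -/
  locks_of_blockcert : ∀ r : Fin P.n, ∀ e : ℕ, ∀ B : P.Block, ∀ t t0 : ℝ,
    P.Honest r → P.startsEpoch r e t0 → t0 ≤ t → P.hasBlockCert r e B t →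
    (¬ ∃ t' < t, P.startsEpoch r (e + 1) t') → P.locksAt r e B t
  /-- locking sets the `lockedBC` variable -/
  locks_lockedBC : ∀ r : Fin P.n, ∀ e : ℕ, ∀ B : P.Block, ∀ t : ℝ, P.Honest r →
    P.locksAt r e B t → P.lockedBCAt r t e B
  /-- `lockedBC` always stores the most recent block certificate known, so the epoch
  of `lockedBC` never decreases after locking -/
  locked_mono : ∀ r : Fin P.n, ∀ e : ℕ, ∀ B : P.Block, ∀ t : ℝ,
    ∀ e' : ℕ, ∀ B' : P.Block, ∀ t' : ℝ, P.Honest r →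
    P.locksAt r e B t → t ≤ t' → P.lockedBCAt r t' e' B' → e ≤ e'
  /-- once set, `lockedBC` is never reset to nil -/
  locked_persist : ∀ r : Fin P.n, ∀ e : ℕ, ∀ B : P.Block, ∀ t t' : ℝ, P.Honest r →
    P.locksAt r e B t → t ≤ t' → ∃ e' B', P.lockedBCAt r t' e' B'
  /-- the `lockedBC` of an honest replica is always a genuine block certificate -/
  locked_certified : ∀ r : Fin P.n, ∀ t : ℝ, ∀ e : ℕ, ∀ B : P.Block, P.Honest r →
    P.lockedBCAt r t e B → P.Certified e B
  /-- upon entering a new epoch, an honest replica broadcasts its `lockedBC`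
  (type S), so every honest replica holds that certificate within `ΔS` -/
  locked_broadcast : ∀ q p : Fin P.n, ∀ e : ℕ, ∀ tq : ℝ, ∀ e' : ℕ, ∀ B : P.Block,
    P.Honest q → P.Honest p → P.startsEpoch q e tq → P.lockedBCAt q tq e' B →
    ∃ t' ≤ tq + P.ΔS, P.hasBlockCert p e' B t'
  /-- regular commit rule: an honest replica commits `B` in epoch `e` when the
  `timeoutCommit` of `2ΔS`, started upon receiving `C_e(B)`, expires with no silence
  or equivocation certificate for `e` received -/
  regular_commit_spec : ∀ r : Fin P.n, ∀ e : ℕ, ∀ B : P.Block, ∀ t : ℝ, P.Honest r →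
    P.commitsRegular r e B t →
    (∃ t0, P.hasBlockCert r e B t0 ∧ t = t0 + 2 * P.ΔS) ∧
      ¬ ∃ t' ≤ t, (P.hasSilenceCert r e t' ∨ P.hasEquivCert r e t')
  /-- fast commit rule: an honest replica commits `B` in epoch `e` upon receiving
  signed votes for `B` in `e` from all `n` replicas, with no silence or equivocation
  certificate for `e` received -/
  fast_commit_spec : ∀ r : Fin P.n, ∀ e : ℕ, ∀ B : P.Block, ∀ t : ℝ, P.Honest r →
    P.commitsFast r e B t →
    (∀ q : Fin P.n, ∃ t' ≤ t, P.votesAt q e B t') ∧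
      ¬ ∃ t' ≤ t, (P.hasSilenceCert r e t' ∨ P.hasEquivCert r e t')
  /-- a directly committed block is committed -/
  commit_of_direct : ∀ r : Fin P.n, ∀ e : ℕ, ∀ B : P.Block, ∀ t : ℝ,
    P.commitsDirectly r e B t → P.commits r B t
  /-- committing a block also (indirectly) commits all its ancestors -/
  commit_ancestors : ∀ r : Fin P.n, ∀ B : P.Block, ∀ t : ℝ, ∀ B' : P.Block,
    P.commits r B t → P.Extends B B' → P.commits r B' t
  /-- every commit by an honest replica stems from a direct commit of a descendant -/
  commit_from_direct : ∀ r : Fin P.n, ∀ B : P.Block, ∀ t : ℝ, P.Honest r →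
    P.commits r B t → ∃ e B' t', t' ≤ t ∧ P.commitsDirectly r e B' t' ∧ P.Extends B' B
  /-- a direct commit in epoch `e` happens after entering epoch `e` -/
  commit_in_epoch : ∀ r : Fin P.n, ∀ e : ℕ, ∀ B : P.Block, ∀ t : ℝ, P.Honest r →
    P.commitsDirectly r e B t → ∃ t0 ≤ t, P.startsEpoch r e t0

end AlterBFTExecution

/-!
A certificate needs `f + 1` votes, so at least one of them is honest, and an honest replica
votes only for a block whose parent is certified in an earlier epoch. Hence certification
propagates from a block to all its ancestors with non-increasing epochs. An honest proposal
in epoch `e` carries a certificate for its parent from an epoch before `e`, and the claim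
follows by applying this propagation to the parent.
-/

namespace AlterBFTExecution

variable {P : AlterBFTExecution} {e : ℕ} {B B' C : P.Block}

lemma Certified.exists_honest_voter (h : P.Certified e B) : ∃ r, P.Honest r ∧ P.votes r e B := by
  obtain ⟨S, hcard, hvotes⟩ := h
  have hS : ¬ S ⊆ P.Byz := fun hsub => by
    have := Finset.card_le_card hsub
    have := P.byz_le
    omega
  obtain ⟨r, hrS, hr⟩ := Finset.not_subset.mp hS
  exact ⟨r, hr, hvotes r hrS⟩

lemma Valid.certified_parent (hP : P.Valid) (hB : P.Certified e B) (hC : P.parent B = some C) :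
    ∃ e' < e, P.Certified e' C := by
  obtain ⟨r, hr, t, hvote⟩ := hB.exists_honest_voter
  have hheight : P.height B ≠ 0 := fun h0 => by
    simp [(hP.parent_none B).mpr h0] at hC
  obtain ⟨C', hC', he'⟩ := hP.vote_parent_cert r e B t hr hvote hheight
  obtain rfl : C' = C := Option.some_inj.mp (hC'.symm.trans hC)
  exact he'

lemma Valid.certified_of_extends (hP : P.Valid) (hB : P.Certified e B) (hext : P.Extends B B') :
    ∃ e' ≤ e, P.Certified e' B' := by
  induction hext using Relation.ReflTransGen.head_induction_on generalizing e with
  | refl => exact ⟨e, le_rfl, hB⟩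
  | head hparent _ ih =>
    obtain ⟨e₁, he₁, hC⟩ := hP.certified_parent hB hparent
    obtain ⟨e', he', hB'⟩ := ih hC
    exact ⟨e', he'.trans he₁.le, hB'⟩

end AlterBFTExecution

/-- Every block `B` with height `k ≠ 0` proposed by an honest replica in
an epoch `e` has as its ancestors only blocks that have been certified in some epoch
`e' < e`. -/
theorem alterbft_certified_ancestors (P : AlterBFTExecution) (hP : AlterBFTExecution.Valid P)
    (r : Fin P.n) (e : ℕ) (B : P.Block) (t : ℝ)
    (hr : P.Honest r) (hprop : P.proposes r e B t) (hh : P.height B ≠ 0) :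
    ∀ B' : P.Block, P.Extends B B' → B' ≠ B → ∃ e' < e, P.Certified e' B' := by
  intro B' hext hne
  obtain ⟨C, hC, e₁, he₁, hcert⟩ := hP.propose_chain r e B t hr hprop hh
  obtain rfl | ⟨C', hC', hext'⟩ := hext.cases_head
  · exact absurd rfl hne
  obtain rfl : C' = C := Option.some_inj.mp (hC'.symm.trans hC)
  obtain ⟨e', he', hB'⟩ := hP.certified_of_extends hcert hext'
  exact ⟨e', he'.trans_lt he₁, hB'⟩
end

section
/- (Block availability) In any execution of the AlterBFT protocol in the hybrid synchronous model with n > 2f replicas of which at most f are Byzantine, every block committed by an honest replica (together with all of its ancestor blocks) is eventually received by every honest replica; specifically, if a committed block was certified at time t, every honest replica receives the full block by time max{t, GST} + Δ_L. -/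
open Finset

/-! A certificate carries `f + 1` votes while at most `f` replicas are Byzantine, so some honest
replica voted for the block. That replica forwarded the full proposal as a type L message, which
reaches every honest replica by `max t GST + ΔL`. -/

namespace AlterBFTExecution

variable {P : AlterBFTExecution}

theorem exists_honest_mem_of_f_lt_card {S : Finset (Fin P.n)} (hS : P.f < S.card) :
    ∃ p ∈ S, P.Honest p :=
  exists_mem_notMem_of_card_lt_card (P.byz_le.trans_lt hS)

theorem CertifiedBy.exists_honest_votesAt {e : ℕ} {B : P.Block} {t : ℝ}
    (h : P.CertifiedBy e B t) : ∃ p, P.Honest p ∧ ∃ t' ≤ t, P.votesAt p e B t' := by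
  obtain ⟨S, hcard, hvotes⟩ := h
  obtain ⟨p, hpS, hp⟩ := exists_honest_mem_of_f_lt_card hcard
  exact ⟨p, hp, hvotes p hpS⟩

theorem Valid.recvProposal_of_certifiedBy (hP : P.Valid) {e : ℕ} {B : P.Block} {t : ℝ}
    (hcert : P.CertifiedBy e B t) {q : Fin P.n} (hq : P.Honest q) :
    ∃ t' ≤ max t P.GST + P.ΔL, P.recvProposal q e B t' := by
  obtain ⟨p, hp, tv, htv, hvote⟩ := hcert.exists_honest_votesAt
  obtain ⟨t', ht', hrecv⟩ := hP.vote_forwards_proposal p q e B tv hp hq hvote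
  have hmax : max tv P.GST ≤ max t P.GST := max_le_max_right P.GST htv
  exact ⟨t', by linarith, hrecv⟩

end AlterBFTExecution

theorem alterbft_block_availability_general (P : AlterBFTExecution) (hP : AlterBFTExecution.Valid P)
    (B : P.Block) :
    ∀ B' : P.Block, P.Extends B B' → ∀ (e : ℕ) (t : ℝ), P.CertifiedBy e B' t →
      ∀ q : Fin P.n, P.Honest q → ∃ t' ≤ max t P.GST + P.ΔL, P.recvProposal q e B' t' :=
  fun _ _ _ _ hcert _ hq => hP.recvProposal_of_certifiedBy hcert hq

/-- **Block availability.** Every block committed by an honest replica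
(together with all of its ancestor blocks) is eventually received by every honest
replica; specifically, if a committed block (or one of its ancestors) was certified at
time `t`, every honest replica receives the full block by time `max t GST + ΔL`. -/
theorem alterbft_block_availability (P : AlterBFTExecution) (hP : AlterBFTExecution.Valid P)
    (r : Fin P.n) (B : P.Block) (tc : ℝ)
    (hr : P.Honest r) (hc : P.commits r B tc) :
    ∀ B' : P.Block, P.Extends B B' → ∀ (e : ℕ) (t : ℝ), P.CertifiedBy e B' t →
      ∀ q : Fin P.n, P.Honest q → ∃ t' ≤ max t P.GST + P.ΔL, P.recvProposal q e B' t' :=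
  alterbft_block_availability_general P hP B
end

section
/- (External validity) In any execution of the AlterBFT protocol in the hybrid synchronous model with n > 2f replicas of which at most f are Byzantine, every block committed by an honest replica satisfies the predefined valid() predicate. -/
open Finset

/-!
Every certified block carries a vote from an honest replica, since a quorum of `f + 1`
voters cannot consist of at most `f` Byzantine ones; honest replicas vote only for valid
blocks whose parent is certified in an earlier epoch. Hence certification, and with it
validity, propagates from a block to all its ancestors. A directly committed block is
certified (by its block certificate, or by the votes of all `n > f` replicas for a fast
commit), and every committed block is an ancestor of a directly committed one.
-/

namespace AlterBFTExecution

variable {P : AlterBFTExecution}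

theorem exists_honest_votes_of_certified {e : ℕ} {B : P.Block} (h : P.Certified e B) :
    ∃ q, P.Honest q ∧ P.votes q e B := by
  obtain ⟨S, hS, hvotes⟩ := h
  obtain ⟨q, hqS, hq⟩ := Finset.exists_mem_notMem_of_card_lt_card (s := P.Byz) (t := S)
    (by have := P.byz_le; omega)
  exact ⟨q, hq, hvotes q hqS⟩

theorem Certified.of_certifiedBy {e : ℕ} {B : P.Block} {t : ℝ} (h : P.CertifiedBy e B t) :
    P.Certified e B := by
  obtain ⟨S, hS, hvotes⟩ := h
  exact ⟨S, hS, fun q hq => (hvotes q hq).imp fun _ => And.right⟩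

theorem Certified.of_forall_votes {e : ℕ} {B : P.Block} (h : ∀ q, P.votes q e B) :
    P.Certified e B :=
  ⟨Finset.univ, by simp only [Finset.card_univ, Fintype.card_fin]; have := P.n_gt; omega,
    fun q _ => h q⟩

namespace Valid

variable (hP : P.Valid)
include hP

theorem validBlock_of_certified {e : ℕ} {B : P.Block} (h : P.Certified e B) :
    P.validBlock B := by
  obtain ⟨q, hq, t, hv⟩ := exists_honest_votes_of_certified h
  exact hP.vote_valid q e B t hq hv

theorem exists_certified_parent {e : ℕ} {B C : P.Block} (h : P.Certified e B)
    (hpar : P.parent B = some C) : ∃ e', P.Certified e' C := by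
  obtain ⟨q, hq, t, hv⟩ := exists_honest_votes_of_certified h
  have hheight : P.height B ≠ 0 := by
    rw [hP.parent_height B C hpar]
    exact Nat.succ_ne_zero _
  obtain ⟨C', hpar', e', -, hcert⟩ := hP.vote_parent_cert q e B t hq hv hheight
  rw [hpar, Option.some_inj] at hpar'
  exact ⟨e', hpar' ▸ hcert⟩

theorem exists_certified_of_extends {B' B : P.Block} (hext : P.Extends B' B)
    (h : ∃ e, P.Certified e B') : ∃ e, P.Certified e B := by
  induction hext using Relation.ReflTransGen.head_induction_on with
  | refl => exact h
  | head hpar _ ih =>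
    obtain ⟨e, hcert⟩ := h
    exact ih (hP.exists_certified_parent hcert hpar)

theorem certified_of_commitsDirectly {r : Fin P.n} {e : ℕ} {B : P.Block} {t : ℝ}
    (hr : P.Honest r) (hdir : P.commitsDirectly r e B t) : P.Certified e B := by
  rcases hdir with hregular | hfast
  · obtain ⟨⟨t0, hcert, -⟩, -⟩ := hP.regular_commit_spec r e B t hr hregular
    exact Certified.of_certifiedBy (hP.blockcert_sound r e B t0 hcert)
  · obtain ⟨hall, -⟩ := hP.fast_commit_spec r e B t hr hfast
    exact Certified.of_forall_votes fun q => (hall q).imp fun _ => And.right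

end Valid

end AlterBFTExecution

/-- **External validity.** Every block committed by an honest replica
satisfies the predefined `valid()` predicate. -/
theorem alterbft_external_validity (P : AlterBFTExecution) (hP : AlterBFTExecution.Valid P)
    (r : Fin P.n) (B : P.Block) (t : ℝ)
    (hr : P.Honest r) (hc : P.commits r B t) :
    P.validBlock B := by
  obtain ⟨e, B', t', -, hdir, hext⟩ := hP.commit_from_direct r B t hr hc
  obtain ⟨e', hcert⟩ :=
    hP.exists_certified_of_extends hext ⟨e, hP.certified_of_commitsDirectly hr hdir⟩
  exact hP.validBlock_of_certified hcert
end

section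
/- In any execution of the AlterBFT protocol in the hybrid synchronous model with n > 2f replicas of which at most f are Byzantine, if an honest replica commits block B_k via the fast commit rule in epoch e (receiving signed votes for B_k in epoch e from all n replicas before detecting misbehavior), then every honest replica voted for B_k in epoch e, and B_k is the only block certified in epoch e. -/
open Finset

namespace AlterBFTExecution

variable {P : AlterBFTExecution}

theorem exists_honest_mem_of_le_card {S : Finset (Fin P.n)} (hS : P.f + 1 ≤ S.card) :
    ∃ q ∈ S, P.Honest q := by
  have hsub : ¬ S ⊆ P.Byz := fun h => by
    have := card_le_card h
    have := P.byz_le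
    omega
  obtain ⟨q, hqS, hq⟩ := not_subset.mp hsub
  exact ⟨q, hqS, hq⟩

theorem Certified.exists_honest_votes {e : ℕ} {B : P.Block} (hB : P.Certified e B) :
    ∃ q, P.Honest q ∧ P.votes q e B := by
  obtain ⟨S, hS, hvotes⟩ := hB
  obtain ⟨q, hqS, hq⟩ := exists_honest_mem_of_le_card hS
  exact ⟨q, hq, hvotes q hqS⟩

theorem Valid.eq_of_votes (hP : P.Valid) {q : Fin P.n} (hq : P.Honest q) {e : ℕ}
    {B B' : P.Block} (hB : P.votes q e B) (hB' : P.votes q e B') : B = B' := by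
  obtain ⟨t, ht⟩ := hB
  obtain ⟨t', ht'⟩ := hB'
  exact hP.vote_once q e B B' t t' hq ht ht'

theorem Valid.votes_of_commitsFast (hP : P.Valid) {r : Fin P.n} (hr : P.Honest r) {e : ℕ}
    {B : P.Block} {t : ℝ} (hc : P.commitsFast r e B t) (q : Fin P.n) : P.votes q e B := by
  obtain ⟨t', -, hv⟩ := (hP.fast_commit_spec r e B t hr hc).1 q
  exact ⟨t', hv⟩

end AlterBFTExecution

/-- If an honest replica commits block `B_k` via the fast commit rule in
epoch `e` (receiving signed votes for `B_k` in epoch `e` from all `n` replicas before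
detecting misbehavior), then every honest replica voted for `B_k` in epoch `e`, and
`B_k` is the only block certified in epoch `e`. -/
theorem alterbft_fast_commit_unique (P : AlterBFTExecution) (hP : AlterBFTExecution.Valid P)
    (r : Fin P.n) (e : ℕ) (Bk : P.Block) (t : ℝ)
    (hr : P.Honest r) (hc : P.commitsFast r e Bk t) :
    (∀ q : Fin P.n, P.Honest q → P.votes q e Bk) ∧
    (∀ B' : P.Block, P.Certified e B' → B' = Bk) := by
  have hall := hP.votes_of_commitsFast hr hc
  refine ⟨fun q _ => hall q, fun B' hB' => ?_⟩
  obtain ⟨q, hq, hqB'⟩ := hB'.exists_honest_votes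
  exact hP.eq_of_votes hq hqB' (hall q)
end

section
/- In any execution of the AlterBFT protocol in the hybrid synchronous model with n > 2f replicas of which at most f are Byzantine, if an honest replica receives a block certificate C_e(B_k) for block B_k in epoch e, then at least one honest replica received the full proposal carrying B_k and voted for it, and therefore every honest replica eventually receives the full block B_k even if it advanced using only the certificate. -/
open Finset

namespace AlterBFTExecution

variable {P : AlterBFTExecution}

theorem exists_honest_mem_of_card_ge {S : Finset (Fin P.n)} (hS : P.f + 1 ≤ S.card) :
    ∃ p ∈ S, P.Honest p :=
  Finset.exists_mem_notMem_of_card_lt_card (P.byz_le.trans_lt hS)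

end AlterBFTExecution

theorem alterbft_full_block_availability_general (P : AlterBFTExecution)
    (hP : AlterBFTExecution.Valid P)
    (r : Fin P.n) (e : ℕ) (Bk : P.Block) (t : ℝ)
    (hc : P.hasBlockCert r e Bk t) :
    (∃ p : Fin P.n, P.Honest p ∧ (∃ t1, P.recvProposal p e Bk t1) ∧ P.votes p e Bk) ∧
    (∀ q : Fin P.n, P.Honest q → ∃ t', P.recvProposal q e Bk t') := by
  obtain ⟨p, hp, tv, -, hvote⟩ := (hP.blockcert_sound r e Bk t hc).exists_honest_votesAt
  refine ⟨⟨p, hp, ?_, tv, hvote⟩, fun q hq => ?_⟩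
  · obtain ⟨t1, -, hrecv⟩ := hP.vote_after_proposal p e Bk tv hp hvote
    exact ⟨t1, hrecv⟩
  · obtain ⟨t', -, hrecv⟩ := hP.vote_forwards_proposal p q e Bk tv hp hq hvote
    exact ⟨t', hrecv⟩

/-- If an honest replica receives a block certificate `C_e(B_k)` for
block `B_k` in epoch `e`, then at least one honest replica received the full proposal
carrying `B_k` and voted for it, and therefore every honest replica eventually
receives the full block `B_k`. -/
theorem alterbft_full_block_availability (P : AlterBFTExecution)
    (hP : AlterBFTExecution.Valid P)
    (r : Fin P.n) (e : ℕ) (Bk : P.Block) (t : ℝ)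
    (hr : P.Honest r) (hc : P.hasBlockCert r e Bk t) :
    (∃ p : Fin P.n, P.Honest p ∧ (∃ t1, P.recvProposal p e Bk t1) ∧ P.votes p e Bk) ∧
    (∀ q : Fin P.n, P.Honest q → ∃ t', P.recvProposal q e Bk t') :=
  alterbft_full_block_availability_general P hP r e Bk t hc
end
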